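/- Let $A$ be a left-symmetric conformal algebra and $M$ a conformal module over $A$. Define a $\lambda$-action on $\mathrm{CHom}(A,M)$ by $(a_\lambda f)_{\lambda+\mu}(b) = a_\lambda(f_\mu(b)) + (f_\mu(a))_{\lambda+\mu} b - f_\mu(a_\lambda b)$. Then $\mathrm{CHom}(A,M)$ is a conformal module over the sub-adjacent Lie conformal algebra $g(A)$. -/

import Mathlib

/- Encoding conventions.
A `ℂ[∂]`-module is encoded as a complex vector space `A` together with an
endomorphism `D : Module.End ℂ A` (the action of `∂`).
A polynomial `Σ cₙ λⁿ ∈ A[λ]` is encoded by its coefficient family `ℕ →₀ A`,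
and `ev l p` is its evaluation at `λ = l`.  Since `ℂ` is infinite, a polynomial
identity in the formal variables `λ, μ, …` is equivalent to the corresponding
family of identities for all complex values of the variables, which is how all
axioms are stated below.
A `λ`-product `a ⊗ b ↦ a_λ b ∈ A[λ]` is encoded as `mul : A → A → (ℕ →₀ A)`
(the coefficients of `a_λ b`), its evaluation at `λ = l` being `ev l (mul a b)`.
`substNeg D p` is the result of substituting the variable of `p` by `-∂-λ`:
it is again a polynomial in `λ` with coefficients `ℕ →₀ A`, so that
`b_{-∂-λ} a` is encoded as `substNeg D (mul b a)` (as a polynomial in `λ`). -/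

namespace LSCpaper

open Finsupp

variable {A M V : Type*} [AddCommGroup A] [Module ℂ A] [AddCommGroup M] [Module ℂ M]
  [AddCommGroup V] [Module ℂ V]

/-- Evaluation of a polynomial with coefficients in `V` at a complex number. -/
noncomputable def ev (l : ℂ) (p : ℕ →₀ V) : V := p.sum fun n c => l ^ n • c

/-- Substitution of `-∂ - λ` for the variable of `p`; the result is the
coefficient family (in `λ`) of the resulting polynomial. -/
noncomputable def substNeg (D : Module.End ℂ A) (p : ℕ →₀ A) : ℕ →₀ A :=
  p.sum fun i c => ∑ k ∈ Finset.range (i + 1),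
    Finsupp.single k ((((-1 : ℂ) ^ k * (i.choose k : ℂ))) • ((-D) ^ (i - k)) c)

/-- `ℂ`-bilinearity of a `λ`-product. -/
def Bilin (f : A → M → ℕ →₀ V) : Prop :=
  (∀ a a' b, f (a + a') b = f a b + f a' b) ∧
  (∀ (r : ℂ) (a : A) (b : M), f (r • a) b = r • f a b) ∧
  (∀ a b b', f a (b + b') = f a b + f a b') ∧
  (∀ (r : ℂ) (a : A) (b : M), f a (r • b) = r • f a b)

/-- `A` with `∂`-action `D` and `λ`-product `mul` is a left-symmetric conformal
algebra. -/
structure IsLSC (D : Module.End ℂ A) (mul : A → A → ℕ →₀ A) : Prop where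
  bilin : Bilin mul
  sesq1 : ∀ (l : ℂ) (a b : A), ev l (mul (D a) b) = (-l) • ev l (mul a b)
  sesq2 : ∀ (l : ℂ) (a b : A), ev l (mul a (D b)) = D (ev l (mul a b)) + l • ev l (mul a b)
  lsym : ∀ (l m : ℂ) (a b c : A),
    ev (l + m) (mul (ev l (mul a b)) c) - ev l (mul a (ev m (mul b c))) =
      ev (l + m) (mul (ev m (mul b a)) c) - ev m (mul b (ev l (mul a c)))

/-- `A` with `∂`-action `D` and `λ`-bracket `br` is a Lie conformal algebra. -/
structure IsLieConf (D : Module.End ℂ A) (br : A → A → ℕ →₀ A) : Prop where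
  bilin : Bilin br
  sesq1 : ∀ (l : ℂ) (a b : A), ev l (br (D a) b) = (-l) • ev l (br a b)
  sesq2 : ∀ (l : ℂ) (a b : A), ev l (br a (D b)) = D (ev l (br a b)) + l • ev l (br a b)
  skew : ∀ (l : ℂ) (a b : A), ev l (br a b) = - ev l (substNeg D (br b a))
  jacobi : ∀ (l m : ℂ) (a b c : A),
    ev l (br a (ev m (br b c))) =
      ev (l + m) (br (ev l (br a b)) c) + ev m (br b (ev l (br a c)))

/-- The evaluated bracket `[a_λ b] = a_λ b - b_{-∂-λ} a` of the sub-adjacent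
Lie conformal algebra. -/
noncomputable def brEv (D : Module.End ℂ A) (mul : A → A → ℕ →₀ A) (l : ℂ) (a b : A) : A :=
  ev l (mul a b) - ev l (substNeg D (mul b a))

end LSCpaper

namespace LSCpaper

variable {A M : Type*} [AddCommGroup A] [Module ℂ A] [AddCommGroup M] [Module ℂ M]

/-- `(M, la, ra)` is a conformal module over the left-symmetric conformal
algebra `(A, D, mul)`.  Here `la a v` encodes `a_λ v ∈ M[λ]` and `ra v a`
encodes `v_λ a ∈ M[λ]`. -/
structure IsLSCMod (D : Module.End ℂ A) (Dm : Module.End ℂ M)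
    (mul : A → A → ℕ →₀ A) (la : A → M → ℕ →₀ M) (ra : M → A → ℕ →₀ M) : Prop where
  lbilin : Bilin la
  rbilin : Bilin ra
  lsesq1 : ∀ (l : ℂ) (a : A) (v : M), ev l (la (D a) v) = (-l) • ev l (la a v)
  lsesq2 : ∀ (l : ℂ) (a : A) (v : M),
    ev l (la a (Dm v)) = Dm (ev l (la a v)) + l • ev l (la a v)
  rsesq1 : ∀ (l : ℂ) (v : M) (a : A), ev l (ra (Dm v) a) = (-l) • ev l (ra v a)
  rsesq2 : ∀ (l : ℂ) (v : M) (a : A),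
    ev l (ra v (D a)) = Dm (ev l (ra v a)) + l • ev l (ra v a)
  lcomp : ∀ (l m : ℂ) (a b : A) (v : M),
    ev (l + m) (la (ev l (mul a b)) v) - ev l (la a (ev m (la b v))) =
      ev (l + m) (la (ev m (mul b a)) v) - ev m (la b (ev l (la a v)))
  rcomp : ∀ (l m : ℂ) (a : A) (v : M) (b : A),
    ev (l + m) (ra (ev l (la a v)) b) - ev l (la a (ev m (ra v b))) =
      ev (l + m) (ra (ev m (ra v a)) b) - ev m (ra v (ev l (mul a b)))

/-- Combine an `A`-valued and an `M`-valued polynomial into an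
`(A × M)`-valued polynomial. -/
noncomputable def pairF (p : ℕ →₀ A) (q : ℕ →₀ M) : ℕ →₀ (A × M) :=
  Finsupp.mapRange (fun x => (x, (0 : M))) rfl p +
    Finsupp.mapRange (fun y => ((0 : A), y)) rfl q

end LSCpaper

namespace LSCpaper

variable {A M : Type*} [AddCommGroup A] [Module ℂ A] [AddCommGroup M] [Module ℂ M]

/-- `f` encodes a conformal linear map `A → M[λ]` (an element of
`CHom(A, M)`): `f a` is the coefficient family of `f_λ(a)`. -/
def ConfLin (D : Module.End ℂ A) (Dm : Module.End ℂ M) (f : A → ℕ →₀ M) : Prop :=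
  (∀ a a', f (a + a') = f a + f a') ∧
  (∀ (r : ℂ) (a : A), f (r • a) = r • f a) ∧
  (∀ (l : ℂ) (a : A), ev l (f (D a)) = Dm (ev l (f a)) + l • ev l (f a))

/-- The action of `∂` on `CHom(A, M)`: `(∂ f)_λ = -λ f_λ`. -/
noncomputable def Dhom (f : A → ℕ →₀ M) : A → ℕ →₀ M :=
  fun b => - Finsupp.mapDomain (· + 1) (f b)

/-- The evaluated `g(A)`-action on `CHom(A, M)`:
`Tact mul la ra l m a f b = ((a_λ f)_{λ+μ}) (b)` at `λ = l`, `μ = m`, i.e.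
`a_λ (f_μ(b)) + (f_μ(a))_{λ+μ} b - f_μ(a_λ b)`. -/
noncomputable def Tact (mul : A → A → ℕ →₀ A) (la : A → M → ℕ →₀ M)
    (ra : M → A → ℕ →₀ M) (l m : ℂ) (a : A) (f : A → ℕ →₀ M) (b : A) : M :=
  ev l (la a (ev m (f b))) + ev (l + m) (ra (ev m (f a)) b) - ev m (f (ev l (mul a b)))

end LSCpaper

/-! The sesquilinearity of `a_λ f` in `a`, in `f` and in its argument follows termwise
from that of the three products occurring in it and the conformal linearity of `f`.  In the Jacobi rule, the
second term `b_{-∂-λ} a` of `[a_λ b]` is only ever fed to maps on which `∂` acts as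
`-s`, where `s` is the total subscript of its place; there `-∂-λ` evaluates to
`s - λ = μ`, so `[a_λ b]` may be replaced by `a_λ b - b_μ a`.  The identity is then a
linear combination of the left-module axiom, two instances of the right-module axiom,
and `f_γ` applied to left-symmetry. -/

namespace LSCpaper

section Evaluation

variable {V : Type*} [AddCommGroup V] [Module ℂ V]

noncomputable def evₗ (l : ℂ) : (ℕ →₀ V) →ₗ[ℂ] V where
  toFun := ev l
  map_add' p q := Finsupp.sum_add_index' (fun _ => smul_zero _) fun _ => smul_add _
  map_smul' r p := by
    simp only [ev, RingHom.id_apply, Finsupp.sum_smul_index' fun _ => smul_zero _,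
      Finsupp.smul_sum, smul_comm r]

lemma ev_add (l : ℂ) (p q : ℕ →₀ V) : ev l (p + q) = ev l p + ev l q := map_add (evₗ l) p q

lemma ev_sub (l : ℂ) (p q : ℕ →₀ V) : ev l (p - q) = ev l p - ev l q := map_sub (evₗ l) p q

lemma ev_neg (l : ℂ) (p : ℕ →₀ V) : ev l (-p) = -ev l p := map_neg (evₗ l) p

lemma ev_smul (l r : ℂ) (p : ℕ →₀ V) : ev l (r • p) = r • ev l p := map_smul (evₗ l) r p

lemma ev_sum {ι : Type*} (l : ℂ) (s : Finset ι) (p : ι → ℕ →₀ V) :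
    ev l (∑ i ∈ s, p i) = ∑ i ∈ s, ev l (p i) := map_sum (evₗ l) p s

lemma ev_single (l : ℂ) (n : ℕ) (c : V) : ev l (Finsupp.single n c) = l ^ n • c :=
  Finsupp.sum_single_index (smul_zero _)

lemma ev_mapDomain_succ (l : ℂ) (p : ℕ →₀ V) :
    ev l (Finsupp.mapDomain (· + 1) p) = l • ev l p := by
  rw [ev, Finsupp.sum_mapDomain_index (fun _ => smul_zero _) (fun _ => smul_add _), ev,
    Finsupp.smul_sum]
  exact Finsupp.sum_congr fun n _ => by rw [pow_succ', mul_smul]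

lemma ev_Dhom {A M : Type*} [AddCommGroup M] [Module ℂ M] (f : A → ℕ →₀ M) (m : ℂ) (a : A) :
    ev m (Dhom f a) = (-m) • ev m (f a) := by
  rw [Dhom, ev_neg, ev_mapDomain_succ, neg_smul]

end Evaluation

namespace Bilin

variable {A M V : Type*} [AddCommGroup A] [Module ℂ A] [AddCommGroup M] [Module ℂ M]
  [AddCommGroup V] [Module ℂ V] {op : A → M → ℕ →₀ V}

noncomputable def leftₗ (h : Bilin op) (v : M) : A →ₗ[ℂ] ℕ →₀ V where
  toFun a := op a v
  map_add' a a' := h.1 a a' v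
  map_smul' r a := h.2.1 r a v

noncomputable def rightₗ (h : Bilin op) (a : A) : M →ₗ[ℂ] ℕ →₀ V where
  toFun v := op a v
  map_add' := h.2.2.1 a
  map_smul' r v := h.2.2.2 r a v

lemma add_left (h : Bilin op) (a a' : A) (v : M) : op (a + a') v = op a v + op a' v :=
  h.1 a a' v

lemma smul_left (h : Bilin op) (r : ℂ) (a : A) (v : M) : op (r • a) v = r • op a v :=
  h.2.1 r a v

lemma sub_left (h : Bilin op) (a a' : A) (v : M) : op (a - a') v = op a v - op a' v :=
  map_sub (h.leftₗ v) a a'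

lemma add_right (h : Bilin op) (a : A) (v v' : M) : op a (v + v') = op a v + op a v' :=
  h.2.2.1 a v v'

lemma smul_right (h : Bilin op) (r : ℂ) (a : A) (v : M) : op a (r • v) = r • op a v :=
  h.2.2.2 r a v

lemma sub_right (h : Bilin op) (a : A) (v v' : M) : op a (v - v') = op a v - op a v' :=
  map_sub (h.rightₗ a) v v'

end Bilin

namespace ConfLin

variable {A M : Type*} [AddCommGroup A] [Module ℂ A] [AddCommGroup M] [Module ℂ M]
  {D : Module.End ℂ A} {Dm : Module.End ℂ M} {f : A → ℕ →₀ M}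

noncomputable def toLinearMap (hf : ConfLin D Dm f) : A →ₗ[ℂ] ℕ →₀ M where
  toFun := f
  map_add' := hf.1
  map_smul' := hf.2.1

lemma map_add (hf : ConfLin D Dm f) (a a' : A) : f (a + a') = f a + f a' := hf.1 a a'

lemma map_smul (hf : ConfLin D Dm f) (r : ℂ) (a : A) : f (r • a) = r • f a := hf.2.1 r a

lemma map_sub (hf : ConfLin D Dm f) (a a' : A) : f (a - a') = f a - f a' :=
  _root_.map_sub hf.toLinearMap a a'

lemma ev_D (hf : ConfLin D Dm f) (l : ℂ) (a : A) :
    ev l (f (D a)) = Dm (ev l (f a)) + l • ev l (f a) :=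
  hf.2.2 l a

end ConfLin

section Substitution

variable {A M V : Type*} [AddCommGroup A] [Module ℂ A] [AddCommGroup M] [Module ℂ M]
  [AddCommGroup V] [Module ℂ V] {D : Module.End ℂ A}

lemma substNeg_add (p q : ℕ →₀ A) : substNeg D (p + q) = substNeg D p + substNeg D q := by
  refine Finsupp.sum_add_index' (fun i => by simp) fun i x y => ?_
  rw [← Finset.sum_add_distrib]
  exact Finset.sum_congr rfl fun k _ => by rw [← Finsupp.single_add, ← smul_add, map_add]

lemma substNeg_single (i : ℕ) (c : A) :
    substNeg D (Finsupp.single i c) = ∑ k ∈ Finset.range (i + 1),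
      Finsupp.single k (((-1 : ℂ) ^ k * (i.choose k : ℂ)) • ((-D) ^ (i - k)) c) :=
  Finsupp.sum_single_index (by simp)

lemma map_pow_neg_apply (φ : A →ₗ[ℂ] V) {s : ℂ} (hφ : ∀ a, φ (D a) = (-s) • φ a)
    (j : ℕ) (a : A) : φ (((-D) ^ j) a) = s ^ j • φ a := by
  induction j generalizing a with
  | zero => simp
  | succ j ih =>
    rw [pow_succ, Module.End.mul_apply, ih, LinearMap.neg_apply, _root_.map_neg, hφ]
    module

lemma map_ev_substNeg (φ : A →ₗ[ℂ] V) {s : ℂ} (hφ : ∀ a, φ (D a) = (-s) • φ a)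
    (l : ℂ) (p : ℕ →₀ A) : φ (ev l (substNeg D p)) = φ (ev (s - l) p) := by
  induction p using Finsupp.induction_linear with
  | zero => simp [substNeg, ev]
  | add p q hp hq => rw [substNeg_add, ev_add, _root_.map_add, hp, hq, ev_add, _root_.map_add]
  | single i c =>
    simp only [substNeg_single, ev_sum, ev_single, _root_.map_sum, _root_.map_smul,
      map_pow_neg_apply φ hφ, smul_smul, ← Finset.sum_smul]
    congr 1
    rw [← neg_add_eq_sub, add_pow]
    exact Finset.sum_congr rfl fun k _ => by rw [neg_pow]; ring

lemma Bilin.ev_substNeg_left {op : A → M → ℕ →₀ V} (h : Bilin op)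
    (hs : ∀ (L : ℂ) (a : A) (v : M), ev L (op (D a) v) = (-L) • ev L (op a v))
    (L l : ℂ) (p : ℕ →₀ A) (v : M) :
    ev L (op (ev l (substNeg D p)) v) = ev L (op (ev (L - l) p) v) :=
  map_ev_substNeg ((evₗ L).comp (h.leftₗ v)) (fun a => hs L a v) l p

lemma ConfLin.ev_substNeg_right {Dm : Module.End ℂ M} {f : A → ℕ →₀ M}
    {ra : M → A → ℕ →₀ M} (hf : ConfLin D Dm f) (hra : Bilin ra)
    (hrs : ∀ (L : ℂ) (v : M) (a : A), ev L (ra (Dm v) a) = (-L) • ev L (ra v a))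
    (L g l : ℂ) (p : ℕ →₀ A) (c : A) :
    ev L (ra (ev g (f (ev l (substNeg D p)))) c) =
      ev L (ra (ev g (f (ev (L - g - l) p))) c) := by
  refine map_ev_substNeg ((evₗ L).comp ((hra.leftₗ c).comp ((evₗ g).comp hf.toLinearMap)))
    (fun x => ?_) l p
  change ev L (ra (ev g (f (D x))) c) = (-(L - g)) • ev L (ra (ev g (f x)) c)
  rw [hf.ev_D, hra.add_left, ev_add, hra.smul_left, ev_smul, hrs]
  module

end Substitution

section Action

variable {A M : Type*} [AddCommGroup A] [Module ℂ A] [AddCommGroup M] [Module ℂ M]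
  {D : Module.End ℂ A} {Dm : Module.End ℂ M} {mul : A → A → ℕ →₀ A}
  {la : A → M → ℕ →₀ M} {ra : M → A → ℕ →₀ M} {f : A → ℕ →₀ M}

lemma Tact_D_left (hA : IsLSC D mul) (hM : IsLSCMod D Dm mul la ra) (hf : ConfLin D Dm f)
    (l m : ℂ) (a b : A) : Tact mul la ra l m (D a) f b = (-l) • Tact mul la ra l m a f b := by
  rw [Tact, Tact, hM.lsesq1, hf.ev_D, hM.rbilin.add_left, hM.rbilin.smul_left, ev_add,
    ev_smul, hM.rsesq1, hA.sesq1, hf.map_smul, ev_smul]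
  module

lemma Tact_Dhom (hla : Bilin la) (hra : Bilin ra) (l m : ℂ) (a : A) (f : A → ℕ →₀ M) (b : A) :
    Tact mul la ra l m a (Dhom f) b = (-m) • Tact mul la ra l m a f b := by
  rw [Tact, Tact, ev_Dhom, ev_Dhom, ev_Dhom, hla.smul_right, ev_smul, hra.smul_left, ev_smul]
  module

lemma Tact_D_right (hA : IsLSC D mul) (hM : IsLSCMod D Dm mul la ra) (hf : ConfLin D Dm f)
    (l m : ℂ) (a b : A) :
    Tact mul la ra l m a f (D b) =
      Dm (Tact mul la ra l m a f b) + (l + m) • Tact mul la ra l m a f b := by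
  rw [Tact, Tact, hf.ev_D, hM.lbilin.add_right, hM.lbilin.smul_right, ev_add, ev_smul,
    hM.lsesq2, hM.rsesq2, hA.sesq2, hf.map_add, hf.map_smul, ev_add, ev_smul, hf.ev_D,
    map_sub, map_add]
  module

lemma Tact_jacobi (hA : IsLSC D mul) (hM : IsLSCMod D Dm mul la ra) (hf : ConfLin D Dm f)
    (l m g : ℂ) (a b c : A) :
    (ev l (la a (Tact mul la ra m g b f c))
        + ev (l + m + g) (ra (Tact mul la ra m g b f a) c)
        - Tact mul la ra m g b f (ev l (mul a c)))
      - (ev m (la b (Tact mul la ra l g a f c))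
        + ev (l + m + g) (ra (Tact mul la ra l g a f b) c)
        - Tact mul la ra l g a f (ev m (mul b c)))
    = Tact mul la ra (l + m) g (brEv D mul l a b) f c := by
  have hleft := hM.lcomp l m a b (ev g (f c))
  have hright_a := hM.rcomp l (m + g) a (ev g (f b)) c
  have hright_b := hM.rcomp m (l + g) b (ev g (f a)) c
  rw [← add_assoc] at hright_a
  rw [show m + (l + g) = l + m + g by ring] at hright_b
  have hlsym := congrArg (fun x => ev g (f x)) (hA.lsym l m a b c)
  simp only [hf.map_sub, ev_sub] at hlsym
  simp only [Tact, brEv, hM.lbilin.add_right, hM.lbilin.sub_right, hM.rbilin.add_left,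
    hM.rbilin.sub_left, hM.lbilin.sub_left, hA.bilin.sub_left, hf.map_sub, ev_add, ev_sub]
  rw [hM.lbilin.ev_substNeg_left hM.lsesq1, hA.bilin.ev_substNeg_left hA.sesq1,
    hf.ev_substNeg_right hM.rbilin hM.rsesq1, add_sub_cancel_left,
    show l + m + g - g - l = m by ring]
  linear_combination (norm := module) hlsym + hright_b - hright_a - hleft

end Action

/-- Let `A` be a left-symmetric conformal algebra and `M` a
conformal module over `A`.  The `λ`-action
`(a_λ f)_{λ+μ}(b) = a_λ(f_μ(b)) + (f_μ(a))_{λ+μ} b - f_μ(a_λ b)` makes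
`CHom(A, M)` a conformal module over the sub-adjacent Lie conformal algebra
`g(A)`: it satisfies (i) `(∂a)_λ f = -λ (a_λ f)`, (ii) `a_λ (∂f) = (∂+λ)(a_λ f)`
(evaluated at total subscript `λ+μ` this reads `-μ • (a_λ f)_{λ+μ}`),
(iii) the action of `a` sends `CHom(A,M)` to itself (conformal linearity of
`a_λ f` in its argument), and (iv) the Jacobi rule
`a_λ(b_μ f) - b_μ(a_λ f) = [a_λ b]_{λ+μ} f`, all evaluations being taken at
arbitrary complex values of the formal variables. -/
theorem chom_gA_module {A M : Type*} [AddCommGroup A] [Module ℂ A]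
    [AddCommGroup M] [Module ℂ M]
    (D : Module.End ℂ A) (Dm : Module.End ℂ M) (mul : A → A → ℕ →₀ A)
    (la : A → M → ℕ →₀ M) (ra : M → A → ℕ →₀ M)
    (hA : IsLSC D mul) (hM : IsLSCMod D Dm mul la ra) :
    (∀ (l m : ℂ) (a b : A) (f : A → ℕ →₀ M), ConfLin D Dm f →
      Tact mul la ra l m (D a) f b = (-l) • Tact mul la ra l m a f b) ∧
    (∀ (l m : ℂ) (a b : A) (f : A → ℕ →₀ M), ConfLin D Dm f →
      Tact mul la ra l m a (Dhom f) b = (-m) • Tact mul la ra l m a f b) ∧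
    (∀ (l m : ℂ) (a b : A) (f : A → ℕ →₀ M), ConfLin D Dm f →
      Tact mul la ra l m a f (D b) =
        Dm (Tact mul la ra l m a f b) + (l + m) • Tact mul la ra l m a f b) ∧
    (∀ (l m g : ℂ) (a b c : A) (f : A → ℕ →₀ M), ConfLin D Dm f →
      (ev l (la a (Tact mul la ra m g b f c))
          + ev (l + m + g) (ra (Tact mul la ra m g b f a) c)
          - Tact mul la ra m g b f (ev l (mul a c)))
        - (ev m (la b (Tact mul la ra l g a f c))
          + ev (l + m + g) (ra (Tact mul la ra l g a f b) c)
          - Tact mul la ra l g a f (ev m (mul b c)))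
      = Tact mul la ra (l + m) g (brEv D mul l a b) f c) :=
  ⟨fun l m a b _ hf => Tact_D_left hA hM hf l m a b,
    fun l m a b f _ => Tact_Dhom hM.lbilin hM.rbilin l m a f b,
    fun l m a b _ hf => Tact_D_right hA hM hf l m a b,
    fun l m g a b c _ hf => Tact_jacobi hA hM hf l m g a b c⟩

end LSCpaper
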